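/- arXiv:1401.5662 — 2 statements merged into one kernel-verified Lean document; each statement's English description precedes it below -/
import Mathlib

section
/- Let T > 0, τ > 0, l > 0, a₁, a₂ ≠ 0, b₁, b₂, d₁, d₂ ∈ ℝ. Then classical solutions on [0,T] of the delay heat equation v_t(x,t) = a₁² v_xx(x,t) + a₂² v_xx(x,t−τ) + b₁ v_x(x,t) + b₂ v_x(x,t−τ) + d₁ v(x,t) + d₂ v(x,t−τ) + g(x,t) for x ∈ (0,l), t ∈ (0,T), with boundary conditions v(0,t) = θ₁(t), v(l,t) = θ₂(t) for t ∈ (−τ,T) and initial condition v(x,t) = ψ(x,t) for x ∈ (0,l), t ∈ (−τ,0), are unique: any two classical solutions coincide on [0,l] × [−τ,T]. -/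
/-!
Subtracting two solutions removes `g`, `ψ`, `θ₁`, `θ₂`. On `[-τ, 0]` the difference vanishes by
the initial condition and continuity. If it vanishes up to a time `s ≥ 0`, then on `[s, s + τ]`
every delayed term vanishes, so the difference solves the heat equation without delay,
`w_t = a₁² w_xx + b₁ w_x + d₁ w`, with zero initial and boundary data, and the weak maximum
principle applied to `±w` makes it vanish up to `s + τ`. Finitely many steps of length `τ`
reach `T`.
-/

open Set Filter Topology intervalIntegral Real

noncomputable section

/-- Classical solution on `[0,T]` of the delay heat equation
`v_t(x,t) = a₁² v_xx(x,t) + a₂² v_xx(x,t−τ) + b₁ v_x(x,t) + b₂ v_x(x,t−τ)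
  + d₁ v(x,t) + d₂ v(x,t−τ) + g(x,t)` on `(0,l) × (0,T)`, with boundary conditions
`v(0,t) = θ₁(t)`, `v(l,t) = θ₂(t)` for `t ∈ (−τ,T)` and initial condition
`v(x,t) = ψ(x,t)` for `(x,t) ∈ (0,l) × (−τ,0)`:
`v ∈ C⁰([0,l] × [−τ,T])`, `∂_t v ∈ C⁰([0,l] × [0,T])`,
`∂_xx v ∈ C⁰([0,l] × [0,T]) ∩ C⁰([0,l] × [−τ,0])`. -/
def IsDelayClassicalSolution (a₁ a₂ b₁ b₂ d₁ d₂ τ l T : ℝ)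
    (g ψ : ℝ → ℝ → ℝ) (θ₁ θ₂ : ℝ → ℝ) (v : ℝ → ℝ → ℝ) : Prop :=
  ContinuousOn (fun p : ℝ × ℝ => v p.1 p.2) (Set.Icc 0 l ×ˢ Set.Icc (-τ) T) ∧
  ContinuousOn (fun p : ℝ × ℝ => deriv (fun s => v p.1 s) p.2) (Set.Icc 0 l ×ˢ Set.Icc 0 T) ∧
  ContinuousOn (fun p : ℝ × ℝ => deriv (fun y => deriv (fun z => v z p.2) y) p.1)
    (Set.Icc 0 l ×ˢ Set.Icc 0 T) ∧
  ContinuousOn (fun p : ℝ × ℝ => deriv (fun y => deriv (fun z => v z p.2) y) p.1)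
    (Set.Icc 0 l ×ˢ Set.Icc (-τ) 0) ∧
  (∀ x ∈ Set.Ioo 0 l, ∀ t ∈ Set.Ioo 0 T, DifferentiableAt ℝ (fun s => v x s) t) ∧
  (∀ x ∈ Set.Ioo 0 l, ∀ t ∈ Set.Ioo (-τ) T,
    DifferentiableAt ℝ (fun y => v y t) x ∧
    DifferentiableAt ℝ (fun y => deriv (fun z => v z t) y) x) ∧
  (∀ x ∈ Set.Ioo 0 l, ∀ t ∈ Set.Ioo 0 T,
    deriv (fun s => v x s) t =
      a₁ ^ 2 * deriv (fun y => deriv (fun z => v z t) y) x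
        + a₂ ^ 2 * deriv (fun y => deriv (fun z => v z (t - τ)) y) x
        + b₁ * deriv (fun y => v y t) x
        + b₂ * deriv (fun y => v y (t - τ)) x
        + d₁ * v x t + d₂ * v x (t - τ) + g x t) ∧
  (∀ t ∈ Set.Ioo (-τ) T, v 0 t = θ₁ t ∧ v l t = θ₂ t) ∧
  (∀ x ∈ Set.Ioo 0 l, ∀ t ∈ Set.Ioo (-τ) 0, v x t = ψ x t)

open Function

theorem deriv_nonneg_of_eventually_le_left {f : ℝ → ℝ} {b : ℝ} (hf : DifferentiableAt ℝ f b)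
    (h : ∀ᶠ s in 𝓝[<] b, f s ≤ f b) : 0 ≤ deriv f b := by
  refine ge_of_tendsto (hf.hasDerivAt.tendsto_slope.mono_left (nhdsLT_le_nhdsNE b)) ?_
  filter_upwards [h, self_mem_nhdsWithin] with s hle hlt
  rw [slope_def_field]
  exact div_nonneg_of_nonpos (sub_nonpos.2 hle) (sub_nonpos.2 (le_of_lt hlt))

theorem mul_le_deriv_of_eventually_exp_mul_le_left {f : ℝ → ℝ} {c t : ℝ}
    (hf : DifferentiableAt ℝ f t)
    (h : ∀ᶠ s in 𝓝[<] t, exp (-c * s) * f s ≤ exp (-c * t) * f t) :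
    c * f t ≤ deriv f t := by
  have hexp : HasDerivAt (fun s => exp (-c * s)) (exp (-c * t) * -c) t := by
    simpa using ((hasDerivAt_id t).const_mul (-c)).exp
  have hprod := hexp.mul hf.hasDerivAt
  have hnonneg := deriv_nonneg_of_eventually_le_left hprod.differentiableAt h
  rw [hprod.deriv] at hnonneg
  nlinarith [exp_pos (-c * t)]

/-- Only continuity is needed: `deriv (deriv f) x > 0` would make `x` a local minimum as well. -/
theorem IsLocalMax.deriv_deriv_nonpos {f : ℝ → ℝ} {x : ℝ} (h : IsLocalMax f x)
    (hc : ContinuousAt f x) : deriv (deriv f) x ≤ 0 := by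
  by_contra! hpos
  have hmin := isLocalMin_of_deriv_deriv_pos hpos h.deriv_eq_zero hc
  have hconst : f =ᶠ[𝓝 x] fun _ => f x := (hmin.and h).mono fun y hy => le_antisymm hy.2 hy.1
  rw [hconst.deriv.deriv_eq, deriv_const', deriv_const] at hpos
  exact lt_irrefl 0 hpos

theorem deriv_deriv_sub {f g : ℝ → ℝ} {x : ℝ} (hf : ∀ᶠ y in 𝓝 x, DifferentiableAt ℝ f y)
    (hg : ∀ᶠ y in 𝓝 x, DifferentiableAt ℝ g y) (hf' : DifferentiableAt ℝ (deriv f) x)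
    (hg' : DifferentiableAt ℝ (deriv g) x) :
    deriv (deriv fun y => f y - g y) x = deriv (deriv f) x - deriv (deriv g) x := by
  have hsub : deriv (fun y => f y - g y) =ᶠ[𝓝 x] fun y => deriv f y - deriv g y := by
    filter_upwards [hf, hg] with y hfy hgy using deriv_fun_sub hfy hgy
  rw [hsub.deriv_eq]
  exact deriv_fun_sub hf' hg'

theorem eqOn_Icc_prod_of_eqOn_Ioo_prod {f g : ℝ × ℝ → ℝ} {a b c d : ℝ} (hab : a < b)
    (hcd : c < d)
    (hf : ContinuousOn f (Icc a b ×ˢ Icc c d)) (hg : ContinuousOn g (Icc a b ×ˢ Icc c d))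
    (h : EqOn f g (Ioo a b ×ˢ Ioo c d)) : EqOn f g (Icc a b ×ˢ Icc c d) :=
  h.of_subset_closure hf hg (prod_mono Ioo_subset_Icc_self Ioo_subset_Icc_self)
    (by rw [closure_prod_eq, closure_Ioo hab.ne, closure_Ioo hcd.ne])

theorem Antitone.holds_of_zero_of_step {Q : ℝ → Prop} {τ T : ℝ} (hQ : Antitone Q)
    (hτ : 0 < τ) (h0 : Q 0) (hstep : ∀ s, 0 ≤ s → s < T → Q s → Q (min (s + τ) T)) : Q T := by
  have hsteps : ∀ n : ℕ, Q (min (n * τ) T) := by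
    intro n
    induction n with
    | zero => simpa using hQ (min_le_left 0 T) h0
    | succ n ih =>
      rcases lt_or_ge ((n : ℝ) * τ) T with hnT | hTn
      · rw [min_eq_left hnT.le] at ih
        simpa [add_mul] using hstep _ (by positivity) hnT ih
      · rw [min_eq_right hTn] at ih
        exact hQ (min_le_right _ _) ih
  obtain ⟨n, hn⟩ := exists_nat_ge (T / τ)
  simpa [min_eq_right ((div_le_iff₀ hτ).1 hn)] using hsteps n

/-- If the maximum of `exp (-(d + 1) t) w` is positive, it lies off the parabolic boundary, and
there `(d + 1) w ≤ w_t ≤ d w`. -/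
theorem heat_subsolution_nonpos {a b d l t₀ t₁ : ℝ} (ha : 0 ≤ a) {w : ℝ → ℝ → ℝ}
    (hc : ContinuousOn (uncurry w) (Icc 0 l ×ˢ Icc t₀ t₁))
    (hinit : ∀ x ∈ Icc 0 l, w x t₀ ≤ 0)
    (hbdry : ∀ t ∈ Icc t₀ t₁, w 0 t ≤ 0 ∧ w l t ≤ 0)
    (hdt : ∀ x ∈ Ioo 0 l, ∀ t ∈ Ioc t₀ t₁, DifferentiableAt ℝ (w x) t)
    (hsub : ∀ x ∈ Ioo 0 l, ∀ t ∈ Ioc t₀ t₁,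
      deriv (w x) t ≤
        a * deriv (deriv fun y => w y t) x + b * deriv (fun y => w y t) x + d * w x t) :
    ∀ x ∈ Icc 0 l, ∀ t ∈ Icc t₀ t₁, w x t ≤ 0 := by
  by_contra! hpos
  obtain ⟨x₀, hx₀, t₀', ht₀', hw₀⟩ := hpos
  set K := Icc 0 l ×ˢ Icc t₀ t₁
  set u : ℝ × ℝ → ℝ := fun p => exp (-(d + 1) * p.2) * w p.1 p.2
  have hu : ContinuousOn u K :=
    (continuous_exp.comp (continuous_const.mul continuous_snd)).continuousOn.mul hc
  obtain ⟨⟨x, t⟩, ⟨hx, ht⟩, hmax⟩ :=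
    (isCompact_Icc.prod isCompact_Icc).exists_isMaxOn ⟨(x₀, t₀'), hx₀, ht₀'⟩ hu
  have hmax : ∀ p ∈ K, u p ≤ u (x, t) := hmax
  have hw : 0 < w x t := by
    have : 0 < u (x, t) := (mul_pos (exp_pos _) hw₀).trans_le (hmax (x₀, t₀') ⟨hx₀, ht₀'⟩)
    exact pos_of_mul_pos_right this (exp_pos _).le
  have hxI : x ∈ Ioo 0 l := by
    refine ⟨hx.1.lt_of_ne ?_, hx.2.lt_of_ne ?_⟩ <;> rintro rfl
    exacts [(hbdry t ht).1.not_gt hw, (hbdry t ht).2.not_gt hw]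
  have htI : t ∈ Ioc t₀ t₁ :=
    ⟨ht.1.lt_of_ne (by rintro rfl; exact (hinit x hx).not_gt hw), ht.2⟩
  have htime : (d + 1) * w x t ≤ deriv (w x) t := by
    refine mul_le_deriv_of_eventually_exp_mul_le_left (hdt x hxI t htI) ?_
    filter_upwards [Ioo_mem_nhdsLT htI.1] with s hs
    exact hmax (x, s) ⟨hx, hs.1.le, hs.2.le.trans ht.2⟩
  have hloc : IsLocalMax (fun y => w y t) x := by
    filter_upwards [Ioo_mem_nhds hxI.1 hxI.2] with y hy
    exact le_of_mul_le_mul_left (hmax (y, t) ⟨Ioo_subset_Icc_self hy, ht⟩) (exp_pos _)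
  have hcont : ContinuousAt (fun y => w y t) x :=
    (hc.comp (continuous_id.prodMk continuous_const).continuousOn
      fun y hy => ⟨hy, ht⟩).continuousAt (Icc_mem_nhds hxI.1 hxI.2)
  have hpde := hsub x hxI t htI
  rw [hloc.deriv_eq_zero] at hpde
  nlinarith [mul_nonpos_of_nonneg_of_nonpos ha (hloc.deriv_deriv_nonpos hcont)]

namespace IsDelayClassicalSolution

variable {a₁ a₂ b₁ b₂ d₁ d₂ τ l T : ℝ} {g ψ : ℝ → ℝ → ℝ} {θ₁ θ₂ : ℝ → ℝ} {v₁ v₂ : ℝ → ℝ → ℝ}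

theorem eqOn_initial (h₁ : IsDelayClassicalSolution a₁ a₂ b₁ b₂ d₁ d₂ τ l T g ψ θ₁ θ₂ v₁)
    (h₂ : IsDelayClassicalSolution a₁ a₂ b₁ b₂ d₁ d₂ τ l T g ψ θ₁ θ₂ v₂)
    (hτ : 0 < τ) (hl : 0 < l) (hT : 0 ≤ T) :
    EqOn (uncurry v₁) (uncurry v₂) (Icc 0 l ×ˢ Icc (-τ) 0) := by
  obtain ⟨hc₁, -, -, -, -, -, -, -, hψ₁⟩ := h₁
  obtain ⟨hc₂, -, -, -, -, -, -, -, hψ₂⟩ := h₂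
  have hK : Icc 0 l ×ˢ Icc (-τ) 0 ⊆ Icc 0 l ×ˢ Icc (-τ) T :=
    prod_mono_right (Icc_subset_Icc_right hT)
  refine eqOn_Icc_prod_of_eqOn_Ioo_prod hl (neg_lt_zero.2 hτ) (hc₁.mono hK) (hc₂.mono hK) ?_
  rintro ⟨x, t⟩ ⟨hx, ht⟩
  exact (hψ₁ x hx t ht).trans (hψ₂ x hx t ht).symm

theorem sub_heat_eq (h₁ : IsDelayClassicalSolution a₁ a₂ b₁ b₂ d₁ d₂ τ l T g ψ θ₁ θ₂ v₁)
    (h₂ : IsDelayClassicalSolution a₁ a₂ b₁ b₂ d₁ d₂ τ l T g ψ θ₁ θ₂ v₂)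
    (hτ : 0 ≤ τ) {x t : ℝ} (hx : x ∈ Ioo 0 l) (ht : t ∈ Ioo 0 T)
    (hdelay : ∀ y ∈ Ioo 0 l, v₁ y (t - τ) = v₂ y (t - τ)) :
    deriv (fun s => v₁ x s - v₂ x s) t =
      a₁ ^ 2 * deriv (deriv fun y => v₁ y t - v₂ y t) x
        + b₁ * deriv (fun y => v₁ y t - v₂ y t) x + d₁ * (v₁ x t - v₂ x t) := by
  obtain ⟨-, -, -, -, hdt₁, hdx₁, hpde₁, -, -⟩ := h₁
  obtain ⟨-, -, -, -, hdt₂, hdx₂, hpde₂, -, -⟩ := h₂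
  have ht' : t ∈ Ioo (-τ) T := ⟨by linarith [ht.1], ht.2⟩
  have hnear : Ioo 0 l ∈ 𝓝 x := Ioo_mem_nhds hx.1 hx.2
  have hdelay' : (fun y => v₁ y (t - τ)) =ᶠ[𝓝 x] fun y => v₂ y (t - τ) :=
    eventually_of_mem hnear hdelay
  rw [deriv_fun_sub (hdt₁ x hx t ht) (hdt₂ x hx t ht),
    deriv_fun_sub (hdx₁ x hx t ht').1 (hdx₂ x hx t ht').1,
    deriv_deriv_sub (eventually_of_mem hnear fun y hy => (hdx₁ y hy t ht').1)
      (eventually_of_mem hnear fun y hy => (hdx₂ y hy t ht').1) (hdx₁ x hx t ht').2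
      (hdx₂ x hx t ht').2,
    hpde₁ x hx t ht, hpde₂ x hx t ht, hdelay'.deriv_eq, hdelay'.deriv.deriv_eq, hdelay x hx]
  ring

theorem le_of_eqOn (h₁ : IsDelayClassicalSolution a₁ a₂ b₁ b₂ d₁ d₂ τ l T g ψ θ₁ θ₂ v₁)
    (h₂ : IsDelayClassicalSolution a₁ a₂ b₁ b₂ d₁ d₂ τ l T g ψ θ₁ θ₂ v₂)
    (hτ : 0 < τ) {s t₁ : ℝ} (hs : 0 ≤ s) (ht₁T : t₁ < T) (ht₁ : t₁ ≤ s + τ)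
    (heq : EqOn (uncurry v₁) (uncurry v₂) (Icc 0 l ×ˢ Icc (-τ) s)) :
    ∀ x ∈ Icc 0 l, ∀ t ∈ Icc s t₁, v₁ x t ≤ v₂ x t := by
  have hK : Icc 0 l ×ˢ Icc s t₁ ⊆ Icc 0 l ×ˢ Icc (-τ) T :=
    prod_mono_right (Icc_subset_Icc (by linarith) ht₁T.le)
  have hwindow : ∀ t ∈ Ioc s t₁, t ∈ Ioo 0 T := fun t ht =>
    ⟨hs.trans_lt ht.1, ht.2.trans_lt ht₁T⟩
  have hpde : ∀ x ∈ Ioo 0 l, ∀ t ∈ Ioc s t₁, _ := fun x hx t ht =>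
    (h₁.sub_heat_eq h₂ hτ.le hx (hwindow t ht) fun y hy =>
      @heq (y, t - τ) ⟨Ioo_subset_Icc_self hy, by linarith [ht.1], by linarith [ht.2]⟩).le
  obtain ⟨hc₁, -, -, -, hdt₁, -, -, hbc₁, -⟩ := h₁
  obtain ⟨hc₂, -, -, -, hdt₂, -, -, hbc₂, -⟩ := h₂
  have hinit : ∀ x ∈ Icc 0 l, v₁ x s - v₂ x s ≤ 0 := fun x hx =>
    (sub_eq_zero.2 (@heq (x, s) ⟨hx, by linarith, le_rfl⟩)).le
  have hbdry : ∀ t ∈ Icc s t₁, v₁ 0 t - v₂ 0 t ≤ 0 ∧ v₁ l t - v₂ l t ≤ 0 := by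
    intro t ht
    have ht' : t ∈ Ioo (-τ) T := ⟨by linarith [ht.1], ht.2.trans_lt ht₁T⟩
    simp [(hbc₁ t ht').1, (hbc₁ t ht').2, (hbc₂ t ht').1, (hbc₂ t ht').2]
  intro x hx t ht
  exact sub_nonpos.1 (heat_subsolution_nonpos (w := fun x t => v₁ x t - v₂ x t) (sq_nonneg a₁)
    ((hc₁.mono hK).sub (hc₂.mono hK)) hinit hbdry
    (fun x hx t ht => (hdt₁ x hx t (hwindow t ht)).sub (hdt₂ x hx t (hwindow t ht))) hpde
    x hx t ht)

theorem eqOn_extend (h₁ : IsDelayClassicalSolution a₁ a₂ b₁ b₂ d₁ d₂ τ l T g ψ θ₁ θ₂ v₁)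
    (h₂ : IsDelayClassicalSolution a₁ a₂ b₁ b₂ d₁ d₂ τ l T g ψ θ₁ θ₂ v₂)
    (hτ : 0 < τ) (hl : 0 < l) {s : ℝ} (hs : 0 ≤ s) (hsT : s < T)
    (heq : EqOn (uncurry v₁) (uncurry v₂) (Icc 0 l ×ˢ Icc (-τ) s)) :
    EqOn (uncurry v₁) (uncurry v₂) (Icc 0 l ×ˢ Icc (-τ) (min (s + τ) T)) := by
  have hmT : min (s + τ) T ≤ T := min_le_right _ _
  have hsm : s < min (s + τ) T := lt_min (by linarith) hsT
  have hK : Icc 0 l ×ˢ Icc (-τ) (min (s + τ) T) ⊆ Icc 0 l ×ˢ Icc (-τ) T :=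
    prod_mono_right (Icc_subset_Icc_right hmT)
  refine eqOn_Icc_prod_of_eqOn_Ioo_prod hl (by linarith) (h₁.1.mono hK) (h₂.1.mono hK) ?_
  rintro ⟨x, t⟩ ⟨hx, ht⟩
  rcases le_or_gt t s with hts | hst
  · exact heq ⟨Ioo_subset_Icc_self hx, ht.1.le, hts⟩
  · have htT : t < T := ht.2.trans_le hmT
    have htτ : t ≤ s + τ := ht.2.le.trans (min_le_left _ _)
    have hx' : x ∈ Icc 0 l := Ioo_subset_Icc_self hx
    exact le_antisymm (h₁.le_of_eqOn h₂ hτ hs htT htτ heq x hx' t ⟨hst.le, le_rfl⟩)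
      (h₂.le_of_eqOn h₁ hτ hs htT htτ heq.symm x hx' t ⟨hst.le, le_rfl⟩)

end IsDelayClassicalSolution

theorem uniqueness_of_delay_classical_solutions_general
    (a₁ a₂ b₁ b₂ d₁ d₂ τ l T : ℝ)
    (hτ : 0 < τ) (hl : 0 < l) (hT : 0 < T)
    (g ψ : ℝ → ℝ → ℝ) (θ₁ θ₂ : ℝ → ℝ) (v₁ v₂ : ℝ → ℝ → ℝ)
    (h₁ : IsDelayClassicalSolution a₁ a₂ b₁ b₂ d₁ d₂ τ l T g ψ θ₁ θ₂ v₁)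
    (h₂ : IsDelayClassicalSolution a₁ a₂ b₁ b₂ d₁ d₂ τ l T g ψ θ₁ θ₂ v₂) :
    ∀ x ∈ Set.Icc 0 l, ∀ t ∈ Set.Icc (-τ) T, v₁ x t = v₂ x t := by
  have heq : EqOn (uncurry v₁) (uncurry v₂) (Icc 0 l ×ˢ Icc (-τ) T) :=
    Antitone.holds_of_zero_of_step
      (fun _ _ hss' h => h.mono (prod_mono_right (Icc_subset_Icc_right hss'))) hτ
      (h₁.eqOn_initial h₂ hτ hl hT.le) fun _ hs hsT h => h₁.eqOn_extend h₂ hτ hl hs hsT h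
  exact fun x hx t ht => @heq (x, t) ⟨hx, ht⟩

/-- Classical solutions of the linear 1D heat equation with a single constant delay
are unique: any two classical solutions coincide on `[0,l] × [−τ,T]`. -/
theorem uniqueness_of_delay_classical_solutions
    (a₁ a₂ b₁ b₂ d₁ d₂ τ l T : ℝ)
    (ha₁ : a₁ ≠ 0) (ha₂ : a₂ ≠ 0) (hτ : 0 < τ) (hl : 0 < l) (hT : 0 < T)
    (g ψ : ℝ → ℝ → ℝ) (θ₁ θ₂ : ℝ → ℝ) (v₁ v₂ : ℝ → ℝ → ℝ)
    (h₁ : IsDelayClassicalSolution a₁ a₂ b₁ b₂ d₁ d₂ τ l T g ψ θ₁ θ₂ v₁)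
    (h₂ : IsDelayClassicalSolution a₁ a₂ b₁ b₂ d₁ d₂ τ l T g ψ θ₁ θ₂ v₂) :
    ∀ x ∈ Set.Icc 0 l, ∀ t ∈ Set.Icc (-τ) T, v₁ x t = v₂ x t :=
  uniqueness_of_delay_classical_solutions_general a₁ a₂ b₁ b₂ d₁ d₂ τ l T hτ hl hT g ψ θ₁ θ₂ v₁ v₂
    h₁ h₂

end
end

section
/- Let a, b ∈ ℝ, τ > 0, b₁ := e^{−aτ} b, and let β ∈ C¹([−τ,0]). Then the delay differential equation ẋ(t) = a x(t) + b x(t − τ) for t ≥ 0 with initial condition x(t) = β(t) for t ∈ [−τ, 0] is uniquely solved by the function x ∈ C⁰([−τ,∞)) ∩ C¹([−τ,0]) ∩ C¹([0,∞)) given by x(t) = e^{a(t+τ)} exp_τ{b₁, t} β(−τ) + ∫_{−τ}^{0} e^{a(t−s)} exp_τ{b₁, t − τ − s} [β′(s) − a β(s)] ds. -/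
open Set Filter Topology Real intervalIntegral

noncomputable section

/-- The delayed exponential function `exp_τ{b, t}`. -/
def delayedExp (b τ t : ℝ) : ℝ :=
  if t < -τ then 0
  else if t < 0 then 1
  else ∑ j ∈ Finset.range (⌊t / τ⌋.toNat + 2),
    b ^ j * (t - ((j : ℝ) - 1) * τ) ^ j / (Nat.factorial j)

/-- `y` solves `ẏ(t) = a y(t) + b y(t−τ)` for `t ≥ 0` with initial condition
`y = β` on `[−τ,0]`: continuous on `[−τ,∞)`, continuously differentiable on `[0,∞)`. -/
def IsDelaySolution (a b τ : ℝ) (β y : ℝ → ℝ) : Prop :=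
  ContinuousOn y (Set.Ici (-τ)) ∧
  (∀ t ∈ Set.Icc (-τ) (0:ℝ), y t = β t) ∧
  (∀ t ∈ Set.Ici (0:ℝ), HasDerivWithinAt y (a * y t + b * y (t - τ)) (Set.Ici 0) t)

/-- The explicit solution formula
`x(t) = e^{a(t+τ)} exp_τ{b₁,t} β(−τ) + ∫_{−τ}^0 e^{a(t−s)} exp_τ{b₁, t−τ−s} [β′(s) − aβ(s)] ds`
with `b₁ = e^{−aτ} b`. -/
def delaySolution (a b τ : ℝ) (β : ℝ → ℝ) (t : ℝ) : ℝ :=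
  Real.exp (a * (t + τ)) * delayedExp (Real.exp (-a * τ) * b) τ t * β (-τ) +
    ∫ s in (-τ)..(0:ℝ), Real.exp (a * (t - s)) * delayedExp (Real.exp (-a * τ) * b) τ (t - τ - s)
      * (derivWithin β (Set.Icc (-τ) 0) s - a * β s)

/-!
On each interval `[kτ, (k+1)τ]` the delayed exponential is a polynomial whose derivative is `b`
times its value at `t - τ`, so `exp_τ{b, ·}` solves `u̇(t) = b u(t - τ)` on `[0, ∞)`.
Differentiating under the integral sign, so does
`u(t) = φ(-τ) exp_τ{b, t} + ∫_{-τ}^0 exp_τ{b, t - τ - s} φ'(s) ds`; for `t ∈ [-τ, 0]` the kernel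
`exp_τ{b, t - τ - s}` is the indicator of `s ≤ t`, so `u = φ` there. With `φ(s) = e^{-as} β(s)`
and `b₁ = e^{-aτ} b`, the function `e^{at} u(t)` is the stated formula and solves the original
equation. Uniqueness is the method of steps: on `[nτ, (n+1)τ]` the delayed term is already
determined, and two solutions of the resulting ODE with the same value at `nτ` coincide.
-/

open MeasureTheory

theorem LipschitzOnWith.comp_sub_const_mul_const {g : ℝ → ℝ} {L : NNReal} {S : Set ℝ}
    (hg : LipschitzOnWith L g S) (d c : ℝ) :
    LipschitzOnWith (Real.nnabs (L * c)) (fun x => g (x - d) * c) ((· - d) ⁻¹' S) :=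
  LipschitzOnWith.of_dist_le_mul fun x hx y hy => by
    have h := hg.dist_le_mul _ hx _ hy
    rw [Real.dist_eq, Real.dist_eq, sub_sub_sub_cancel_right] at h
    rw [Real.coe_nnabs, abs_mul, NNReal.abs_eq, Real.dist_eq, Real.dist_eq, ← sub_mul, abs_mul,
      mul_right_comm]
    exact mul_le_mul_of_nonneg_right h (abs_nonneg c)

def delayedExpTerm (b τ : ℝ) (j : ℕ) (t : ℝ) : ℝ :=
  b ^ j * (t - ((j : ℝ) - 1) * τ) ^ j / (Nat.factorial j)

def delayedExpPartialSum (b τ : ℝ) (n : ℕ) (t : ℝ) : ℝ :=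
  ∑ j ∈ Finset.range n, delayedExpTerm b τ j t

section DelayedExp

variable {b τ t : ℝ}

theorem delayedExp_of_lt (h : t < -τ) : delayedExp b τ t = 0 := by
  simp [delayedExp, h]

theorem delayedExp_of_mem_Icc (h : t ∈ Icc (-τ) 0) : delayedExp b τ t = 1 := by
  rcases h.2.lt_or_eq with h0 | rfl
  · simp [delayedExp, h.1.not_gt, h0]
  · simp [delayedExp, Finset.sum_range_succ, neg_nonpos.mp h.1]

theorem hasDerivAt_delayedExpTerm (j : ℕ) (t : ℝ) :
    HasDerivAt (delayedExpTerm b τ (j + 1)) (b * delayedExpTerm b τ j (t - τ)) t := by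
  have hterm : delayedExpTerm b τ (j + 1) =
      fun x => b ^ (j + 1) * (x - j * τ) ^ (j + 1) / (j + 1).factorial := by
    funext x
    simp [delayedExpTerm]
  rw [hterm]
  refine ((((hasDerivAt_id' t).sub_const _).pow (j + 1)).const_mul _).div_const _ |>.congr_deriv ?_
  simp only [delayedExpTerm, Nat.factorial_succ, Nat.add_sub_cancel]
  push_cast
  field_simp
  ring

theorem hasDerivAt_delayedExpPartialSum (n : ℕ) (t : ℝ) :
    HasDerivAt (delayedExpPartialSum b τ (n + 1)) (b * delayedExpPartialSum b τ n (t - τ)) t := by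
  induction n with
  | zero =>
    have h1 : delayedExpPartialSum b τ 1 = fun _ => 1 := by
      funext x
      simp [delayedExpPartialSum, delayedExpTerm]
    simpa [h1, delayedExpPartialSum] using hasDerivAt_const t (1 : ℝ)
  | succ n ih =>
    have h := ih.add (hasDerivAt_delayedExpTerm (b := b) (τ := τ) n t)
    have hsum : delayedExpPartialSum b τ (n + 2) =
        fun x => delayedExpPartialSum b τ (n + 1) x + delayedExpTerm b τ (n + 1) x := by
      funext x
      simp [delayedExpPartialSum, Finset.sum_range_succ]
    rw [hsum]
    refine h.congr_deriv ?_
    simp only [delayedExpPartialSum, Finset.sum_range_succ]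
    ring

theorem delayedExp_of_nonneg (hτ : 0 < τ) (ht : 0 ≤ t) :
    delayedExp b τ t = delayedExpPartialSum b τ (⌊t / τ⌋₊ + 2) t := by
  simp [delayedExp, delayedExpPartialSum, delayedExpTerm, (by linarith : -τ < t).not_gt,
    ht.not_gt, Int.floor_toNat]

theorem delayedExp_eq_partialSum (hτ : 0 < τ) (k : ℕ) (ht : t ∈ Icc (k * τ) ((k + 1) * τ)) :
    delayedExp b τ t = delayedExpPartialSum b τ (k + 2) t := by
  rw [delayedExp_of_nonneg hτ (le_trans (by positivity) ht.1)]
  rcases ht.2.lt_or_eq with hlt | rfl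
  · rw [(Nat.floor_eq_iff (div_nonneg (le_trans (by positivity) ht.1) hτ.le)).mpr
      ⟨(le_div_iff₀ hτ).2 ht.1, (div_lt_iff₀ hτ).2 hlt⟩]
  · have hfloor : ⌊((k : ℝ) + 1) * τ / τ⌋₊ = k + 1 := by
      rw [mul_div_cancel_right₀ _ hτ.ne']
      exact_mod_cast Nat.floor_natCast (k + 1)
    rw [hfloor, delayedExpPartialSum, delayedExpPartialSum, Finset.sum_range_succ _ (k + 2),
      add_eq_left, delayedExpTerm, show ((k : ℝ) + 1) * τ - (((k + 2 : ℕ) : ℝ) - 1) * τ = 0 by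
        push_cast; ring]
    simp

theorem delayedExp_sub_eq_partialSum (hτ : 0 < τ) (k : ℕ) (ht : t ∈ Icc (k * τ) ((k + 1) * τ)) :
    delayedExp b τ (t - τ) = delayedExpPartialSum b τ (k + 1) (t - τ) := by
  cases k with
  | zero =>
    simp only [Nat.cast_zero, zero_mul, zero_add, one_mul] at ht
    rw [delayedExp_of_mem_Icc ⟨by linarith [ht.1], by linarith [ht.2]⟩]
    simp [delayedExpPartialSum, delayedExpTerm]
  | succ k =>
    refine delayedExp_eq_partialSum hτ k ⟨?_, ?_⟩ <;> push_cast at ht ⊢ <;> linarith [ht.1, ht.2]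

theorem hasDerivWithinAt_delayedExp_Icc (hτ : 0 < τ) (k : ℕ) (ht : t ∈ Icc (k * τ) ((k + 1) * τ)) :
    HasDerivWithinAt (delayedExp b τ) (b * delayedExp b τ (t - τ))
      (Icc (k * τ) ((k + 1) * τ)) t := by
  rw [delayedExp_sub_eq_partialSum hτ k ht]
  exact (hasDerivAt_delayedExpPartialSum (k + 1) t).hasDerivWithinAt.congr
    (fun _ hx => delayedExp_eq_partialSum hτ k hx) (delayedExp_eq_partialSum hτ k ht)

theorem hasDerivWithinAt_delayedExp_Ici (hτ : 0 < τ) (ht : 0 ≤ t) :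
    HasDerivWithinAt (delayedExp b τ) (b * delayedExp b τ (t - τ)) (Ici t) t := by
  set k := ⌊t / τ⌋₊
  have hk : t ∈ Ico (k * τ) ((k + 1) * τ) :=
    ⟨(le_div_iff₀ hτ).1 (Nat.floor_le (div_nonneg ht hτ.le)),
      (div_lt_iff₀ hτ).1 (Nat.lt_floor_add_one _)⟩
  exact (hasDerivWithinAt_delayedExp_Icc hτ k (Ico_subset_Icc_self hk)).mono_of_mem_nhdsWithin
    (Icc_mem_nhdsGE_of_mem hk)

theorem hasDerivWithinAt_delayedExp_Iic (hτ : 0 < τ) (ht : 0 < t) :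
    HasDerivWithinAt (delayedExp b τ) (b * delayedExp b τ (t - τ)) (Iic t) t := by
  set k := ⌈t / τ⌉₊ - 1
  have hceil : (k : ℝ) + 1 = ⌈t / τ⌉₊ := by
    have : 1 ≤ ⌈t / τ⌉₊ := Nat.one_le_iff_ne_zero.2 (Nat.ceil_pos.2 (div_pos ht hτ)).ne'
    rw [← Nat.cast_add_one, Nat.sub_add_cancel this]
  have hk : t ∈ Ioc (k * τ) ((k + 1) * τ) := by
    rw [hceil]
    refine ⟨(lt_div_iff₀ hτ).1 ?_, (div_le_iff₀ hτ).1 (Nat.le_ceil _)⟩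
    linarith [Nat.ceil_lt_add_one (div_pos ht hτ).le, hceil]
  exact (hasDerivWithinAt_delayedExp_Icc hτ k (Ioc_subset_Icc_self hk)).mono_of_mem_nhdsWithin
    (Icc_mem_nhdsLE_of_mem hk)

theorem hasDerivAt_delayedExp (hτ : 0 < τ) (ht : 0 < t) :
    HasDerivAt (delayedExp b τ) (b * delayedExp b τ (t - τ)) t := by
  have h := (hasDerivWithinAt_delayedExp_Iic (b := b) hτ ht).union
    (hasDerivWithinAt_delayedExp_Ici hτ ht.le)
  rwa [Iic_union_Ici, hasDerivWithinAt_univ] at h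

theorem hasDerivWithinAt_delayedExp_Ici_zero (hτ : 0 < τ) (ht : 0 ≤ t) :
    HasDerivWithinAt (delayedExp b τ) (b * delayedExp b τ (t - τ)) (Ici 0) t := by
  rcases ht.eq_or_lt with rfl | ht
  · exact hasDerivWithinAt_delayedExp_Ici hτ le_rfl
  · exact (hasDerivAt_delayedExp hτ ht).hasDerivWithinAt

theorem continuous_delayedExp_max_zero (hτ : 0 < τ) :
    Continuous fun x => delayedExp b τ (max x 0) := by
  have h : ContinuousOn (delayedExp b τ) (Ici 0) := fun _ ht =>
    (hasDerivWithinAt_delayedExp_Ici_zero hτ ht).continuousWithinAt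
  exact h.comp_continuous (continuous_id.max continuous_const) fun x => le_max_right x 0

theorem delayedExp_max_zero (hx : -τ ≤ t) : delayedExp b τ (max t 0) = delayedExp b τ t := by
  rcases le_total t 0 with h | h
  · rw [max_eq_right h, delayedExp_of_mem_Icc ⟨hx, h⟩, delayedExp_of_mem_Icc ⟨by linarith, le_rfl⟩]
  · rw [max_eq_left h]

theorem hasDerivAt_delayedExp_max_zero (hτ : 0 < τ) (ht : t ≠ 0) :
    HasDerivAt (fun x => delayedExp b τ (max x 0)) (b * delayedExp b τ (t - τ)) t := by
  rcases ht.lt_or_gt with ht | ht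
  · rw [delayedExp_of_lt (by linarith), mul_zero]
    refine (hasDerivAt_const t (1 : ℝ)).congr_of_eventuallyEq ?_
    filter_upwards [Iio_mem_nhds ht] with x hx
    rw [max_eq_right (le_of_lt hx), delayedExp_of_mem_Icc ⟨by linarith, le_rfl⟩]
  · refine (hasDerivAt_delayedExp hτ ht).congr_of_eventuallyEq ?_
    filter_upwards [Ioi_mem_nhds ht] with x hx
    rw [max_eq_left (le_of_lt hx)]

/- `exp_τ{b, max x 0}` agrees with `exp_τ{b, x}` for `x ≥ -τ` but, unlike it, is continuous on all
of `ℝ`; this makes the integrand below Lipschitz in `t` on a two-sided neighbourhood. -/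
theorem exists_lipschitzOnWith_delayedExp_max_zero (hτ : 0 < τ) (M : ℝ) :
    ∃ L, LipschitzOnWith L (fun x => delayedExp b τ (max x 0)) (Iic M) := by
  have hderiv : Continuous fun x => b * delayedExp b τ (max (x - τ) 0) :=
    continuous_const.mul ((continuous_delayedExp_max_zero hτ).comp (continuous_sub_right τ))
  obtain ⟨C, hC⟩ := isCompact_Icc.exists_bound_of_continuousOn
    (hderiv.continuousOn (s := Icc 0 (max M 0)))
  have hE : LipschitzOnWith C.toNNReal (delayedExp b τ) (Icc 0 (max M 0)) := by
    refine (convex_Icc 0 (max M 0)).lipschitzOnWith_of_nnnorm_hasDerivWithin_le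
      (fun x hx => (hasDerivWithinAt_delayedExp_Ici_zero hτ hx.1).mono Icc_subset_Ici_self) ?_
    intro x hx
    rw [← NNReal.coe_le_coe, coe_nnnorm, Real.coe_toNNReal',
      ← delayedExp_max_zero (by linarith [hx.1])]
    exact (hC x hx).trans (le_max_left _ _)
  refine ⟨C.toNNReal, ?_⟩
  have h := hE.comp (LipschitzWith.id.max_const 0).lipschitzOnWith
    (fun x hx => ⟨le_max_right x 0, max_le_max_right 0 hx⟩)
  rwa [mul_one] at h

theorem measurable_delayedExp (hτ : 0 < τ) : Measurable (delayedExp b τ) := by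
  have h : delayedExp b τ = (Iio (-τ)).piecewise 0 (fun x => delayedExp b τ (max x 0)) := by
    funext x
    by_cases hx : x < -τ
    · simp [hx, delayedExp_of_lt hx]
    · simp [hx, delayedExp_max_zero (not_lt.1 hx)]
  rw [h]
  exact measurable_const.piecewise measurableSet_Iio (continuous_delayedExp_max_zero hτ).measurable

theorem hasDerivWithinAt_integral_delayedExp_mul (hτ : 0 < τ) {ψ : ℝ → ℝ}
    (hψ : IntervalIntegrable ψ volume (-τ) 0) (ht : 0 ≤ t) :
    HasDerivWithinAt (fun t => ∫ s in (-τ)..0, delayedExp b τ (t - τ - s) * ψ s)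
      (b * ∫ s in (-τ)..0, delayedExp b τ (t - τ - τ - s) * ψ s) (Ici 0) t := by
  have hτ0 : -τ ≤ 0 := by linarith
  obtain ⟨L, hL⟩ := exists_lipschitzOnWith_delayedExp_max_zero (b := b) hτ (t + 1)
  have hcont (x : ℝ) : Continuous fun s => delayedExp b τ (max (x - τ - s) 0) :=
    (continuous_delayedExp_max_zero hτ).comp (by fun_prop)
  have hψmeas := hψ.def'.aestronglyMeasurable
  have hlip : ∀ s ∈ uIoc (-τ) 0, LipschitzOnWith (Real.nnabs (L * ψ s))
      (fun x => delayedExp b τ (max (x - τ - s) 0) * ψ s) (Iio (t + 1)) := by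
    intro s hs
    rw [uIoc_of_le hτ0] at hs
    simp only [sub_sub]
    exact (hL.comp_sub_const_mul_const (τ + s) (ψ s)).mono fun x hx => by
      simp only [mem_preimage, mem_Iic]; linarith [mem_Iio.1 hx, hs.1]
  have hderiv : ∀ s ≠ t - τ, HasDerivAt (fun x => delayedExp b τ (max (x - τ - s) 0) * ψ s)
      (b * (delayedExp b τ (t - τ - τ - s) * ψ s)) t := by
    intro s hs
    have h := (hasDerivAt_delayedExp_max_zero (b := b) hτ (sub_ne_zero.2 hs.symm)).comp t
      (((hasDerivAt_id t).sub_const τ).sub_const s)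
    refine (h.mul_const (ψ s)).congr_deriv ?_
    simp only [mul_one, sub_right_comm _ s τ]
    ring
  have key := intervalIntegral.hasDerivAt_integral_of_dominated_loc_of_lip
    (F := fun x s => delayedExp b τ (max (x - τ - s) 0) * ψ s)
    (bound := fun s => L * ψ s) (Iio_mem_nhds (lt_add_one t))
    (Eventually.of_forall fun x => (hcont x).aestronglyMeasurable.mul hψmeas)
    (hψ.continuousOn_mul (hcont t).continuousOn)
    ((((measurable_delayedExp hτ).comp (measurable_const.sub measurable_id)).aestronglyMeasurable
      |>.mul hψmeas).const_mul b)
    (ae_of_all _ hlip) (hψ.const_mul L)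
    ((Measure.ae_ne volume (t - τ)).mono fun s hs _ => hderiv s hs)
  have hagree : ∀ x ∈ Ici (0 : ℝ), ∫ s in (-τ)..0, delayedExp b τ (x - τ - s) * ψ s =
      ∫ s in (-τ)..0, delayedExp b τ (max (x - τ - s) 0) * ψ s := fun x hx =>
    intervalIntegral.integral_congr fun s hs => by
      rw [uIcc_of_le hτ0] at hs
      simp only [delayedExp_max_zero (by linarith [hs.2, mem_Ici.1 hx] : -τ ≤ x - τ - s)]
  rw [← intervalIntegral.integral_const_mul]
  exact key.2.hasDerivWithinAt.congr hagree (hagree t ht)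

end DelayedExp

def pureDelaySolution (b τ : ℝ) (φ ψ : ℝ → ℝ) (t : ℝ) : ℝ :=
  φ (-τ) * delayedExp b τ t + ∫ s in (-τ)..0, delayedExp b τ (t - τ - s) * ψ s

section PureDelaySolution

variable {b τ t : ℝ} {φ ψ : ℝ → ℝ}

theorem hasDerivWithinAt_pureDelaySolution (hτ : 0 < τ) (hψ : IntervalIntegrable ψ volume (-τ) 0)
    (ht : 0 ≤ t) :
    HasDerivWithinAt (pureDelaySolution b τ φ ψ) (b * pureDelaySolution b τ φ ψ (t - τ))
      (Ici 0) t := by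
  refine (((hasDerivWithinAt_delayedExp_Ici_zero hτ ht).const_mul (φ (-τ))).add
    (hasDerivWithinAt_integral_delayedExp_mul hτ hψ ht)).congr_deriv ?_
  simp only [pureDelaySolution]
  ring

theorem pureDelaySolution_eq_of_mem_Icc
    (hφ : ∀ s ∈ Icc (-τ) 0, HasDerivWithinAt φ (ψ s) (Icc (-τ) 0) s)
    (hψ : IntervalIntegrable ψ volume (-τ) 0) (ht : t ∈ Icc (-τ) 0) :
    pureDelaySolution b τ φ ψ t = φ t := by
  have hkernel : ∫ s in (-τ)..0, delayedExp b τ (t - τ - s) * ψ s =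
      ∫ s in (-τ)..0, {s | s ≤ t}.indicator ψ s := by
    refine intervalIntegral.integral_congr fun s hs => ?_
    rw [uIcc_of_le (ht.1.trans ht.2)] at hs
    by_cases hst : s ≤ t
    · rw [indicator_of_mem (show s ∈ {s | s ≤ t} from hst),
        delayedExp_of_mem_Icc ⟨by linarith, by linarith [hs.1, ht.2]⟩, one_mul]
    · rw [indicator_of_notMem (show s ∉ {s | s ≤ t} from hst),
        delayedExp_of_lt (by linarith [not_le.1 hst]), zero_mul]
  have hFTC : ∫ s in (-τ)..t, ψ s = φ t - φ (-τ) := by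
    refine intervalIntegral.integral_eq_sub_of_hasDerivAt_of_le ht.1
      (fun s hs => (hφ s ⟨hs.1, hs.2.trans ht.2⟩).continuousWithinAt.mono
        (Icc_subset_Icc_right ht.2))
      (fun s hs => (hφ s ⟨hs.1.le, (hs.2.trans_le ht.2).le⟩).hasDerivAt
        (Icc_mem_nhds hs.1 (hs.2.trans_le ht.2)))
      (hψ.mono_set ?_)
    rw [uIcc_of_le ht.1, uIcc_of_le (ht.1.trans ht.2)]
    exact Icc_subset_Icc_right ht.2
  rw [pureDelaySolution, delayedExp_of_mem_Icc ht, hkernel, intervalIntegral.integral_indicator ht,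
    hFTC]
  ring

end PureDelaySolution

section DelaySolution

variable {a b τ : ℝ} {β y z : ℝ → ℝ} {t : ℝ}

theorem hasDerivWithinAt_exp_neg_mul_mul {s : Set ℝ} (hβ : DifferentiableWithinAt ℝ β s t) :
    HasDerivWithinAt (fun x => exp (-a * x) * β x)
      (exp (-a * t) * (derivWithin β s t - a * β t)) s t := by
  refine ((((hasDerivAt_id' t).const_mul (-a)).exp.hasDerivWithinAt.mul
    hβ.hasDerivWithinAt).congr_deriv ?_)
  ring

theorem intervalIntegrable_exp_neg_mul_mul_derivWithin {p q : ℝ} (hpq : p < q)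
    (hβ : ContDiffOn ℝ 1 β (Icc p q)) :
    IntervalIntegrable (fun x => exp (-a * x) * (derivWithin β (Icc p q) x - a * β x))
      volume p q :=
  ((by fun_prop : Continuous fun x => exp (-a * x)).continuousOn.mul
    ((hβ.continuousOn_derivWithin (uniqueDiffOn_Icc hpq) le_rfl).sub
      (continuousOn_const.mul hβ.continuousOn))).intervalIntegrable_of_Icc hpq.le

variable (a b τ β t) in
theorem delaySolution_eq_exp_mul :
    delaySolution a b τ β t = exp (a * t) * pureDelaySolution (exp (-a * τ) * b) τ
      (fun s => exp (-a * s) * β s)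
      (fun s => exp (-a * s) * (derivWithin β (Icc (-τ) 0) s - a * β s)) t := by
  rw [delaySolution, pureDelaySolution, mul_add (exp (a * t)),
    ← intervalIntegral.integral_const_mul]
  congr 1
  · rw [show a * (t + τ) = a * t + -a * -τ by ring, exp_add]
    ring
  · refine intervalIntegral.integral_congr fun s _ => ?_
    rw [show a * (t - s) = a * t + -a * s by ring, exp_add]
    ring

theorem delaySolution_eq_of_mem_Icc (hτ : 0 < τ) (hβ : ContDiffOn ℝ 1 β (Icc (-τ) 0))
    (ht : t ∈ Icc (-τ) 0) : delaySolution a b τ β t = β t := by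
  rw [delaySolution_eq_exp_mul, pureDelaySolution_eq_of_mem_Icc
    (fun s hs => hasDerivWithinAt_exp_neg_mul_mul ((hβ.differentiableOn one_ne_zero) s hs))
    (intervalIntegrable_exp_neg_mul_mul_derivWithin (by linarith) hβ) ht,
    ← mul_assoc, ← exp_add, neg_mul, add_neg_cancel, exp_zero, one_mul]

theorem hasDerivWithinAt_delaySolution (hτ : 0 < τ) (hβ : ContDiffOn ℝ 1 β (Icc (-τ) 0))
    (ht : 0 ≤ t) :
    HasDerivWithinAt (delaySolution a b τ β)
      (a * delaySolution a b τ β t + b * delaySolution a b τ β (t - τ)) (Ici 0) t := by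
  have h := ((hasDerivAt_id' t).const_mul a).exp.hasDerivWithinAt.mul
    (hasDerivWithinAt_pureDelaySolution (b := exp (-a * τ) * b)
      (φ := fun s => exp (-a * s) * β s) hτ
      (intervalIntegrable_exp_neg_mul_mul_derivWithin (a := a) (by linarith) hβ) ht)
  rw [funext (delaySolution_eq_exp_mul a b τ β)]
  refine h.congr_deriv ?_
  simp only [mul_one]
  rw [show a * (t - τ) = a * t + -a * τ by ring, exp_add]
  ring

theorem isDelaySolution_delaySolution (hτ : 0 < τ) (hβ : ContDiffOn ℝ 1 β (Icc (-τ) 0)) :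
    IsDelaySolution a b τ β (delaySolution a b τ β) := by
  refine ⟨?_, fun t ht => delaySolution_eq_of_mem_Icc hτ hβ ht,
    fun t ht => hasDerivWithinAt_delaySolution hτ hβ ht⟩
  rw [← Icc_union_Ici_eq_Ici (by linarith : -τ ≤ 0)]
  exact (hβ.continuousOn.congr fun t ht => delaySolution_eq_of_mem_Icc hτ hβ ht).union_of_isClosed
    (fun t ht => (hasDerivWithinAt_delaySolution hτ hβ ht).continuousWithinAt) isClosed_Icc
    isClosed_Ici

theorem IsDelaySolution.congr (hτ : 0 ≤ τ) (hy : IsDelaySolution a b τ β y)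
    (hyz : EqOn y z (Ici (-τ))) : IsDelaySolution a b τ β z := by
  obtain ⟨hcont, hinit, hderiv⟩ := hy
  have hsub : Ici (0 : ℝ) ⊆ Ici (-τ) := Ici_subset_Ici.2 (by linarith)
  refine ⟨hcont.congr hyz.symm, fun t ht => (hyz ht.1).symm.trans (hinit t ht), fun t ht => ?_⟩
  rw [← hyz (hsub ht), ← hyz (by simp only [mem_Ici]; linarith [mem_Ici.1 ht])]
  exact (hderiv t ht).congr (fun x hx => (hyz (hsub hx)).symm) (hyz (hsub ht)).symm

theorem IsDelaySolution.eqOn (hτ : 0 < τ) (hy : IsDelaySolution a b τ β y)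
    (hz : IsDelaySolution a b τ β z) : EqOn y z (Ici (-τ)) := by
  obtain ⟨hyc, hyβ, hyd⟩ := hy
  obtain ⟨hzc, hzβ, hzd⟩ := hz
  have hsteps (n : ℕ) : EqOn y z (Icc (-τ) (n * τ)) := by
    induction n with
    | zero =>
      rw [Nat.cast_zero, zero_mul]
      exact fun t ht => (hyβ t ht).trans (hzβ t ht).symm
    | succ n ih =>
      have hnτ : 0 ≤ n * τ := by positivity
      have hsub : Icc (n * τ) ((n + 1) * τ) ⊆ Ici (-τ) := fun t ht => by
        simp only [mem_Ici]; linarith [ht.1]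
      have hderiv {x : ℝ → ℝ}
          (hx : ∀ t ∈ Ici 0, HasDerivWithinAt x (a * x t + b * x (t - τ)) (Ici 0) t) {t : ℝ}
          (ht : t ∈ Ico (n * τ) ((n + 1) * τ)) :
          HasDerivWithinAt x (a * x t + b * x (t - τ)) (Ici t) t :=
        (hx t (hnτ.trans ht.1)).mono (Ici_subset_Ici.2 (hnτ.trans ht.1))
      have hdelay {t : ℝ} (ht : t ∈ Ico (n * τ) ((n + 1) * τ)) : y (t - τ) = z (t - τ) :=
        ih ⟨by linarith [ht.1], by linarith [ht.2]⟩
      -- with the delayed term known from the previous step, `y` and `z` solve the same ODE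
      have hnext : EqOn y z (Icc (n * τ) ((n + 1) * τ)) :=
        ODE_solution_unique_of_mem_Icc_right (v := fun t x => a * x + b * y (t - τ))
          (s := fun _ => univ) (K := ‖a‖₊)
          (fun t _ => LipschitzOnWith.of_dist_le_mul fun x _ x' _ => le_of_eq (by
            simp [Real.dist_eq, ← mul_sub, abs_mul]))
          (hyc.mono hsub) (fun t ht => hderiv hyd ht) (fun _ _ => mem_univ _)
          (hzc.mono hsub) (fun t ht => hdelay ht ▸ hderiv hzd ht) (fun _ _ => mem_univ _)
          (ih ⟨by linarith, le_rfl⟩)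
      push_cast
      rw [← Icc_union_Icc_eq_Icc (b := n * τ) (by linarith) (by linarith)]
      exact ih.union hnext
  exact fun t ht => hsteps ⌈t / τ⌉₊ ⟨ht, (div_le_iff₀ hτ).1 (Nat.le_ceil _)⟩

end DelaySolution

/-- For `β ∈ C¹([−τ,0])`, the delay differential equation `ẋ(t) = a x(t) + b x(t−τ)`,
`t ≥ 0`, with `x = β` on `[−τ,0]`, is uniquely solved by the explicit formula above
(for `t ≥ 0`; on `[−τ,0]` the solution is `β`). -/
theorem delay_ode_general_initial_data_unique_solution
    (a b τ : ℝ) (hτ : 0 < τ) (β : ℝ → ℝ) (hβ : ContDiffOn ℝ 1 β (Set.Icc (-τ) 0)) :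
    (IsDelaySolution a b τ β
      (fun t => if t ≤ 0 then β t else delaySolution a b τ β t)) ∧
    (∀ t ∈ Set.Ici (0:ℝ),
      (fun t => if t ≤ 0 then β t else delaySolution a b τ β t) t = delaySolution a b τ β t) ∧
    ∀ y : ℝ → ℝ, IsDelaySolution a b τ β y →
      ∀ t ∈ Set.Ici (0:ℝ), y t = delaySolution a b τ β t := by
  have hsol := isDelaySolution_delaySolution (a := a) (b := b) hτ hβ
  have hglue : EqOn (delaySolution a b τ β)
      (fun t => if t ≤ 0 then β t else delaySolution a b τ β t) (Ici (-τ)) := fun t ht => by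
    dsimp only
    split_ifs with h
    · exact delaySolution_eq_of_mem_Icc hτ hβ ⟨ht, h⟩
    · rfl
  have hIci : Ici (0 : ℝ) ⊆ Ici (-τ) := Ici_subset_Ici.2 (by linarith)
  exact ⟨hsol.congr hτ.le hglue, fun t ht => (hglue (hIci ht)).symm,
    fun y hy t ht => hy.eqOn hτ hsol (hIci ht)⟩

end
end
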